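/- For every N ∈ ℕ there exists L₀ ∈ ℕ such that for every integer L ≥ L₀ the following holds: every finitely supported probability measure ξ* on [0,∞) that maximizes the Bayesian D-criterion Ψ_L(ξ) = Σ_{j=1}^{L} log( 4 ∫₀^∞ e^{x−j}/(1+e^{x−j})² dξ(x) ) (terms may equal −∞) over all finitely supported probability measures ξ on [0,∞) is supported at more than N points. -/
import Mathlib


open scoped BigOperators ENNReal

/-- An approximate design on `ℝ`: a finitely supported probability measure,
given by its support points and positive weights summing to one. -/
structure Design where
  support : Finset ℝ
  w : ℝ → ℝ
  w_pos : ∀ x ∈ support, 0 < w x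
  w_zero : ∀ x ∉ support, w x = 0
  sum_one : ∑ x ∈ support, w x = 1

/-- Information `M(ξ,β) = ∫₀^∞ e^{x−β}/(1+e^{x−β})² dξ(x)` of a design in the logistic
regression model `η(x,β) = 1/(1+e^{x−β})`. -/
noncomputable def logisticInfo (ξ : Design) (β : ℝ) : ℝ :=
  ∑ x ∈ ξ.support, ξ.w x * (Real.exp (x - β) / (1 + Real.exp (x - β)) ^ 2)

/-- `negLog r` is `−log r` as an extended nonnegative real, with value `∞` for `r ≤ 0`.
Since each term `log(4M(ξ,j))` of the Bayesian criterion is nonpositive (and may be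
`−∞`), maximizing `Ψ_L(ξ) = ∑_{j=1}^L log(4M(ξ,j))` is the same as minimizing the sum
of the losses `negLog (4M(ξ,j))` in `ℝ≥0∞`. -/
noncomputable def negLog (r : ℝ) : ℝ≥0∞ :=
  if r ≤ 0 then ⊤ else ENNReal.ofReal (-Real.log r)

/-- Bayesian loss of a design with respect to the uniform prior on `{1,…,L}`:
`−Ψ_L(ξ) = ∑_{j=1}^L −log(4M(ξ,j))`, with value `∞` allowed. -/
noncomputable def bayesLoss (L : ℕ) (ξ : Design) : ℝ≥0∞ :=
  ∑ j ∈ Finset.Icc 1 L, negLog (4 * logisticInfo ξ (j : ℝ))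

lemma info_le_exp (u : ℝ) : Real.exp u / (1 + Real.exp u) ^ 2 ≤ Real.exp (-|u|) := by
  have he : 0 < Real.exp u := Real.exp_pos u
  rcases le_or_gt 0 u with h | h
  · rw [abs_of_nonneg h]
    have h1 : (Real.exp u) ^ 2 ≤ (1 + Real.exp u) ^ 2 := by nlinarith
    have h2 : Real.exp u / (1 + Real.exp u) ^ 2 ≤ Real.exp u / (Real.exp u) ^ 2 :=
      div_le_div_of_nonneg_left he.le (by positivity) h1
    calc Real.exp u / (1 + Real.exp u) ^ 2 ≤ Real.exp u / (Real.exp u) ^ 2 := h2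
      _ = Real.exp (-u) := by rw [Real.exp_neg]; field_simp [pow_two]
  · rw [abs_of_neg h, neg_neg]
    have h1 : (1:ℝ) ≤ (1 + Real.exp u) ^ 2 := by nlinarith
    calc Real.exp u / (1 + Real.exp u) ^ 2 ≤ Real.exp u / 1 := by
          apply div_le_div_of_nonneg_left he.le one_pos h1
      _ = Real.exp u := by ring

lemma card_near_le (L d : ℕ) (x : ℝ) :
    ((Finset.Icc 1 L).filter (fun j : ℕ => |x - (j : ℝ)| ≤ (d : ℝ))).card ≤ 2 * d + 1 := by
  classical
  have hsub : ∀ j ∈ (Finset.Icc 1 L).filter (fun j : ℕ => |x - (j : ℝ)| ≤ (d : ℝ)),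
      (j : ℤ) ∈ Finset.Icc ⌈x - d⌉ ⌊x + d⌋ := by
    intro j hj
    rw [Finset.mem_filter] at hj
    have habs := abs_le.mp hj.2
    rw [Finset.mem_Icc]
    constructor
    · rw [Int.ceil_le]; push_cast; linarith [habs.2]
    · rw [Int.le_floor]; push_cast; linarith [habs.1]
  have hinj : Set.InjOn (fun j : ℕ => (j : ℤ))
      ((Finset.Icc 1 L).filter (fun j : ℕ => |x - (j : ℝ)| ≤ (d : ℝ))) := by
    intro a _ b _ h; simpa using h
  have := Finset.card_le_card_of_injOn _ hsub hinj
  refine this.trans ?_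
  rw [Int.card_Icc]
  have hfc : (⌊x + d⌋ : ℝ) ≤ x + d := Int.floor_le _
  have hcc : (x : ℝ) - d ≤ ⌈x - d⌉ := Int.le_ceil _
  have : ⌊x + d⌋ + 1 - ⌈x - d⌉ ≤ 2 * d + 1 := by
    have : (⌊x + d⌋ : ℝ) + 1 - ⌈x - d⌉ ≤ 2 * d + 1 := by linarith
    exact_mod_cast this
  omega

noncomputable def unifDesign (L : ℕ) (hL : 0 < L) : Design where
  support := (Finset.Icc 1 L).image (Nat.cast : ℕ → ℝ)
  w := fun x => if x ∈ (Finset.Icc 1 L).image (Nat.cast : ℕ → ℝ) then (L : ℝ)⁻¹ else 0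
  w_pos := by
    intro x hx
    simp only [hx, if_true]
    positivity
  w_zero := by intro x hx; simp [hx]
  sum_one := by
    rw [Finset.sum_congr rfl (fun x hx => if_pos hx), Finset.sum_const,
      Finset.card_image_of_injective _ Nat.cast_injective, Nat.card_Icc]
    simp only [Nat.add_sub_cancel, nsmul_eq_mul]
    field_simp

lemma unifDesign_subset (L : ℕ) (hL : 0 < L) :
    ↑(unifDesign L hL).support ⊆ Set.Ici (0 : ℝ) := by
  intro x hx
  simp only [unifDesign, Finset.coe_image, Set.mem_image] at hx
  obtain ⟨j, _, rfl⟩ := hx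
  exact Set.mem_Ici.mpr (Nat.cast_nonneg j)

lemma unifDesign_loss (L : ℕ) (hL : 0 < L) :
    bayesLoss L (unifDesign L hL) ≤ ENNReal.ofReal ((L : ℝ) * Real.log L) := by
  have hL1 : (1 : ℝ) ≤ L := by exact_mod_cast hL
  have hinfo : ∀ j ∈ Finset.Icc 1 L, (L : ℝ)⁻¹ * (1/4) ≤ logisticInfo (unifDesign L hL) (j : ℝ) := by
    intro j hj
    have hjmem : (j : ℝ) ∈ (unifDesign L hL).support := by
      simp only [unifDesign, Finset.mem_image]
      exact ⟨j, hj, rfl⟩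
    have := Finset.single_le_sum (f := fun x =>
        (unifDesign L hL).w x * (Real.exp (x - j) / (1 + Real.exp (x - j)) ^ 2))
      (fun x hx => by
        have h1 := ((unifDesign L hL).w_pos x hx).le
        positivity) hjmem
    refine le_trans ?_ this
    have : (unifDesign L hL).w (j : ℝ) = (L : ℝ)⁻¹ := by
      simp only [unifDesign]
      rw [if_pos]
      simpa [unifDesign] using hjmem
    beta_reduce
    rw [this]
    simp [Real.exp_zero]
    norm_num
  have hterm : ∀ j ∈ Finset.Icc 1 L,
      negLog (4 * logisticInfo (unifDesign L hL) (j : ℝ)) ≤ ENNReal.ofReal (Real.log L) := by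
    intro j hj
    have h1 := hinfo j hj
    have hLpos : (0 : ℝ) < L := by linarith
    have hpos : 0 < 4 * logisticInfo (unifDesign L hL) (j : ℝ) := by
      have : (0:ℝ) < (L : ℝ)⁻¹ * (1/4) := by positivity
      linarith
    rw [negLog, if_neg (not_le.mpr hpos)]
    apply ENNReal.ofReal_le_ofReal
    have hlog : Real.log ((L:ℝ)⁻¹) ≤ Real.log (4 * logisticInfo (unifDesign L hL) (j : ℝ)) := by
      apply Real.log_le_log (by positivity)
      linarith
    rw [Real.log_inv] at hlog
    linarith
  calc bayesLoss L (unifDesign L hL) ≤ ∑ j ∈ Finset.Icc 1 L, ENNReal.ofReal (Real.log L) :=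
        Finset.sum_le_sum hterm
    _ = (Finset.Icc 1 L).card • ENNReal.ofReal (Real.log L) := (Finset.sum_const _)
    _ = ENNReal.ofReal ((L : ℝ) * Real.log L) := by
        rw [Nat.card_Icc, Nat.add_sub_cancel, nsmul_eq_mul,
          ← ENNReal.ofReal_natCast L, ← ENNReal.ofReal_mul (by positivity)]

set_option maxHeartbeats 1000000 in
/-- For the logistic regression model on `[0,∞)`: for every `N` there is `L₀` such that
for every integer `L ≥ L₀`, every Bayesian `D`-optimal design with respect to the
uniform prior on `{1,…,L}` is supported at more than `N` points. -/
theorem logistic_bayes_support_unbounded (N : ℕ) :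
    ∃ L₀ : ℕ, ∀ L : ℕ, L₀ ≤ L →
      ∀ ξstar : Design, ↑ξstar.support ⊆ Set.Ici (0 : ℝ) →
        (∀ ξ : Design, ↑ξ.support ⊆ Set.Ici (0 : ℝ) →
          bayesLoss L ξstar ≤ bayesLoss L ξ) →
        N < ξstar.support.card := by
  classical
  set M : ℕ := N + 1 with hMdef
  refine ⟨(64 * M) ^ 2, ?_⟩
  intro L hL0 ξstar _ hopt
  by_contra hcard
  push_neg at hcard
  have hM1 : (1 : ℝ) ≤ (M : ℝ) := by exact_mod_cast Nat.le_add_left 1 N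
  have hNM : (N : ℝ) + 1 = (M : ℝ) := by exact_mod_cast rfl
  have hLbig' : (4096 : ℝ) * (M : ℝ) ^ 2 ≤ (L : ℝ) := by
    have : ((64 * M) ^ 2 : ℕ) ≤ (L : ℕ) := hL0
    have h2 : (((64 * M) ^ 2 : ℕ) : ℝ) ≤ (L : ℝ) := by exact_mod_cast this
    push_cast at h2; nlinarith
  have hLpos : (0 : ℕ) < L := by
    have : (0:ℝ) < (L:ℝ) := by nlinarith
    exact_mod_cast this
  have hL1 : (1 : ℝ) ≤ (L : ℝ) := by exact_mod_cast hLpos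
  have h4M : 4 * (M : ℝ) ≤ (L : ℝ) := by nlinarith
  set d : ℕ := L / (8 * M) with hddef
  have h8M : (0 : ℕ) < 8 * M := by omega
  have hd0 : (0 : ℝ) ≤ (d : ℝ) := Nat.cast_nonneg d
  have hd_up : (8 : ℝ) * (M : ℝ) * (d : ℝ) ≤ (L : ℝ) := by
    have h := Nat.div_mul_le_self L (8 * M)
    have hr : (d : ℝ) * ((8 : ℝ) * (M : ℝ)) ≤ (L : ℝ) := by exact_mod_cast h
    linarith
  have hd_low : (L : ℝ) < 8 * (M : ℝ) * ((d : ℝ) + 1) := by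
    have h1 : 8 * M * d + L % (8 * M) = L := Nat.div_add_mod L (8 * M)
    have h2 : L % (8 * M) < 8 * M := Nat.mod_lt L h8M
    have hr : (8 : ℝ) * M * d + ((L % (8 * M) : ℕ) : ℝ) = (L : ℝ) := by exact_mod_cast h1
    have hr2 : ((L % (8 * M) : ℕ) : ℝ) < 8 * (M : ℝ) := by exact_mod_cast h2
    linarith
  -- d is large: 512 M ≤ d + 1
  have hd512 : 512 * (M : ℝ) ≤ (d : ℝ) + 1 := by
    have h4 : (8 * (M : ℝ)) * (512 * M) < (8 * M) * ((d : ℝ) + 1) := by nlinarith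
    exact (lt_of_mul_lt_mul_left h4 (by positivity)).le
  have hlog4 : Real.log 4 ≤ 3 := by
    have := Real.log_le_sub_one_of_pos (by norm_num : (0:ℝ) < 4)
    linarith
  have hdlog : (0 : ℝ) ≤ (d : ℝ) - Real.log 4 := by nlinarith
  -- split {1,…,L} into far and near indices
  set Ffar := (Finset.Icc 1 L).filter
    (fun j : ℕ => ∀ x ∈ ξstar.support, (d : ℝ) < |x - (j : ℝ)|) with hFfar
  set Fnear := (Finset.Icc 1 L).filter
    (fun j : ℕ => ¬ ∀ x ∈ ξstar.support, (d : ℝ) < |x - (j : ℝ)|) with hFnear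
  have hsplit : Ffar.card + Fnear.card = L := by
    rw [hFfar, hFnear, Finset.card_filter_add_card_filter_not, Nat.card_Icc]
    omega
  have hnear_card : Fnear.card ≤ N * (2 * d + 1) := by
    have hsub : Fnear ⊆ ξstar.support.biUnion
        (fun x => (Finset.Icc 1 L).filter (fun j : ℕ => |x - (j : ℝ)| ≤ (d : ℝ))) := by
      intro j hj
      rw [hFnear, Finset.mem_filter] at hj
      obtain ⟨hjI, hjP⟩ := hj
      push_neg at hjP
      obtain ⟨x, hx, hxd⟩ := hjP
      exact Finset.mem_biUnion.mpr ⟨x, hx, Finset.mem_filter.mpr ⟨hjI, hxd⟩⟩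
    calc Fnear.card ≤ _ := Finset.card_le_card hsub
      _ ≤ ∑ x ∈ ξstar.support, ((Finset.Icc 1 L).filter
            (fun j : ℕ => |x - (j : ℝ)| ≤ (d : ℝ))).card := Finset.card_biUnion_le
      _ ≤ ∑ _x ∈ ξstar.support, (2 * d + 1) :=
          Finset.sum_le_sum (fun x _ => card_near_le L d x)
      _ = ξstar.support.card * (2 * d + 1) := by rw [Finset.sum_const, smul_eq_mul]
      _ ≤ N * (2 * d + 1) := Nat.mul_le_mul_right _ hcard
  have hfar_half : (L : ℝ) / 2 ≤ (Ffar.card : ℝ) := by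
    have h1 : (Ffar.card : ℝ) + (Fnear.card : ℝ) = (L : ℝ) := by exact_mod_cast hsplit
    have h2 : (Fnear.card : ℝ) ≤ (N : ℝ) * (2 * (d : ℝ) + 1) := by exact_mod_cast hnear_card
    have hNd : (N : ℝ) * (d : ℝ) = (M : ℝ) * (d : ℝ) - (d : ℝ) := by
      rw [← hNM]; ring
    nlinarith
  -- lower bound each far term
  have hfar_term : ∀ j ∈ Ffar,
      ENNReal.ofReal ((d : ℝ) - Real.log 4) ≤ negLog (4 * logisticInfo ξstar (j : ℝ)) := by
    intro j hj
    rw [hFfar, Finset.mem_filter] at hj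
    have hMle : logisticInfo ξstar (j : ℝ) ≤ Real.exp (-(d : ℝ)) := by
      rw [logisticInfo]
      calc ∑ x ∈ ξstar.support, ξstar.w x *
            (Real.exp (x - j) / (1 + Real.exp (x - j)) ^ 2)
          ≤ ∑ x ∈ ξstar.support, ξstar.w x * Real.exp (-(d : ℝ)) := by
            apply Finset.sum_le_sum
            intro x hx
            have hw := (ξstar.w_pos x hx).le
            have h1 : Real.exp (x - j) / (1 + Real.exp (x - j)) ^ 2
                ≤ Real.exp (-|x - (j : ℝ)|) := info_le_exp _
            have h2 : Real.exp (-|x - (j : ℝ)|) ≤ Real.exp (-(d : ℝ)) :=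
              Real.exp_le_exp.mpr (by linarith [hj.2 x hx])
            exact mul_le_mul_of_nonneg_left (h1.trans h2) hw
        _ = Real.exp (-(d : ℝ)) := by
            rw [← Finset.sum_mul, ξstar.sum_one, one_mul]
    rw [negLog]
    split_ifs with h
    · exact le_top
    · push_neg at h
      apply ENNReal.ofReal_le_ofReal
      have hMpos : 0 < logisticInfo ξstar (j : ℝ) := by linarith
      have hlog : Real.log (4 * logisticInfo ξstar (j : ℝ))
          = Real.log 4 + Real.log (logisticInfo ξstar (j : ℝ)) :=
        Real.log_mul (by norm_num) (ne_of_gt hMpos)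
      have hlog2 : Real.log (logisticInfo ξstar (j : ℝ)) ≤ -(d : ℝ) := by
        have := Real.log_le_log hMpos hMle
        rwa [Real.log_exp] at this
      rw [hlog]
      linarith
  -- lower bound on the optimal loss
  have hlower : ENNReal.ofReal (((L : ℝ) / 2) * ((d : ℝ) - Real.log 4))
      ≤ bayesLoss L ξstar := by
    calc ENNReal.ofReal (((L : ℝ) / 2) * ((d : ℝ) - Real.log 4))
        ≤ ENNReal.ofReal ((Ffar.card : ℝ) * ((d : ℝ) - Real.log 4)) :=
          ENNReal.ofReal_le_ofReal (mul_le_mul_of_nonneg_right hfar_half hdlog)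
      _ = (Ffar.card : ℝ≥0∞) * ENNReal.ofReal ((d : ℝ) - Real.log 4) := by
          rw [ENNReal.ofReal_mul (Nat.cast_nonneg _), ENNReal.ofReal_natCast]
      _ = Ffar.card • ENNReal.ofReal ((d : ℝ) - Real.log 4) := by
          rw [nsmul_eq_mul]
      _ ≤ ∑ j ∈ Ffar, negLog (4 * logisticInfo ξstar (j : ℝ)) :=
          Finset.card_nsmul_le_sum _ _ _ hfar_term
      _ ≤ bayesLoss L ξstar := by
          rw [bayesLoss]
          exact Finset.sum_le_sum_of_subset (Finset.filter_subset _ _)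
  -- combine with the uniform design upper bound
  have hchain : ENNReal.ofReal (((L : ℝ) / 2) * ((d : ℝ) - Real.log 4))
      ≤ ENNReal.ofReal ((L : ℝ) * Real.log L) :=
    hlower.trans ((hopt _ (unifDesign_subset L hLpos)).trans (unifDesign_loss L hLpos))
  have hlogL0 : (0 : ℝ) ≤ Real.log L := Real.log_nonneg hL1
  have hreal : ((L : ℝ) / 2) * ((d : ℝ) - Real.log 4) ≤ (L : ℝ) * Real.log L :=
    (ENNReal.ofReal_le_ofReal_iff (by positivity)).mp hchain
  -- final numeric contradiction via s = √L
  set s : ℝ := Real.sqrt L with hsdef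
  have hs2 : s ^ 2 = (L : ℝ) := Real.sq_sqrt (by positivity)
  have hsM : 64 * (M : ℝ) ≤ s := by
    rw [hsdef, show (64 * (M : ℝ)) = Real.sqrt ((64 * (M:ℝ)) ^ 2) from
      (Real.sqrt_sq (by positivity)).symm]
    exact Real.sqrt_le_sqrt (by nlinarith)
  have hs1 : (1 : ℝ) ≤ s := by nlinarith
  have hd8s : 8 * s - 1 ≤ (d : ℝ) := by
    have h1 : 64 * (M : ℝ) * s ≤ s ^ 2 := by nlinarith
    have h3 : (8 * (M : ℝ)) * (8 * s) < (8 * M) * ((d : ℝ) + 1) := by nlinarith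
    have h4 : 8 * s < (d : ℝ) + 1 := lt_of_mul_lt_mul_left h3 (by positivity)
    linarith
  have hlogL : Real.log L ≤ 2 * (s - 1) := by
    have h1 : Real.log (L : ℝ) = 2 * Real.log s := by
      rw [← hs2, Real.log_pow]; push_cast; ring
    have h2 : Real.log s ≤ s - 1 := Real.log_le_sub_one_of_pos (by linarith)
    linarith
  have key1 : ((L : ℝ) / 2) * (8 * s - 4) ≤ ((L : ℝ) / 2) * ((d : ℝ) - Real.log 4) :=
    mul_le_mul_of_nonneg_left (by linarith) (by positivity)
  have key2 : (L : ℝ) * Real.log L ≤ (L : ℝ) * (2 * (s - 1)) :=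
    mul_le_mul_of_nonneg_left hlogL (by positivity)
  have hLs : (1 : ℝ) ≤ (L : ℝ) * s := by nlinarith
  nlinarith [key1, key2, hreal, hLs]
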